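/- Let n ≥ 3 and let K ⊂ ℝ^n be a convex body with g(K) = K for every g ∈ SO(♦^n). Let e_1, …, e_n be the standard basis of ℝ^n, let 2 ≤ k ≤ n−1, and let x be a point of the boundary of K lying in span{e_2, …, e_k}. If the gauge function μ_K is differentiable at x, then ∇μ_K(x) ∈ span{e_2, …, e_k}. -/

import Mathlib

noncomputable section

def IsConvexBody {n : ℕ} (K : Set (EuclideanSpace ℝ (Fin n))) : Prop :=
  IsCompact K ∧ Convex ℝ K ∧ (interior K).Nonempty

def crossPolytope (n : ℕ) : Set (EuclideanSpace ℝ (Fin n)) :=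
  {x | ∑ i, |x i| ≤ 1}

/-- `stdBasis n i` is the `i`-th standard basis vector `e_{i+1}` of `ℝⁿ` (0-based index). -/
def stdBasis (n : ℕ) (i : Fin n) : EuclideanSpace ℝ (Fin n) :=
  EuclideanSpace.single i (1 : ℝ)

/-- The span of the standard basis vectors `e₂, …, e_k` (1-based as in the paper),
that is, of `stdBasis n i` for `1 ≤ i ≤ k - 1` in 0-based indexing. -/
def spanE (n k : ℕ) : Submodule ℝ (EuclideanSpace ℝ (Fin n)) :=
  Submodule.span ℝ (stdBasis n '' {i : Fin n | 1 ≤ (i : ℕ) ∧ (i : ℕ) ≤ k - 1})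

/-! Negating two coordinates `i ≠ j` is a rotation preserving `♦ⁿ`, hence `K` and `μ_K`. When
neither index lies in `{2, …, k}` it fixes `x`, so by the chain rule it also fixes `∇μ_K(x)`, whose
`i`-th coordinate therefore vanishes. As `k ≤ n - 1`, every index outside `{2, …, k}` has such a
partner `j`. -/

open Pointwise

theorem gauge_image_linearEquiv {E F : Type*} [AddCommGroup E] [Module ℝ E] [AddCommGroup F]
    [Module ℝ F] (g : E ≃ₗ[ℝ] F) (s : Set E) (x : E) : gauge (g '' s) (g x) = gauge s x := by
  simp only [gauge_def]
  congr 1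
  ext r
  simp only [Set.mem_ofPred_eq, ← Set.image_smul_comm g r s (g.map_smul r), g.injective.mem_set_image]

theorem gauge_comp_eq_of_image_eq {E : Type*} [AddCommGroup E] [Module ℝ E] (g : E ≃ₗ[ℝ] E)
    {s : Set E} (hs : g '' s = s) : gauge s ∘ g = gauge s :=
  funext fun x => by rw [Function.comp_apply, ← gauge_image_linearEquiv g s x, hs]

theorem HasGradientAt.map_eq_of_comp_eq {E : Type*} [NormedAddCommGroup E] [InnerProductSpace ℝ E]
    [CompleteSpace E] {f : E → ℝ} {x y : E} (g : E ≃ₗᵢ[ℝ] E) (hfg : f ∘ g = f) (hgx : g x = x)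
    (hy : HasGradientAt f y x) : g y = y := by
  have hD := hasGradientAt_iff_hasFDerivAt.mp hy
  have hDg : HasFDerivAt f ((InnerProductSpace.toDual ℝ E y).comp (g : E →L[ℝ] E)) x := by
    have := (hgx ▸ hD).comp x (g : E →L[ℝ] E).hasFDerivAt
    rwa [hfg] at this
  have hinv : ∀ w, inner ℝ y (g w) = inner ℝ y w := fun w => by
    simpa using congrArg (fun T : E →L[ℝ] ℝ => T w) (hD.unique hDg).symm
  refine ext_inner_right ℝ fun v => ?_
  rw [← g.apply_symm_apply v, g.inner_map_map, hinv]

section negCoords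

variable {ι : Type*} [Fintype ι] [DecidableEq ι]

def negCoords (S : Finset ι) : EuclideanSpace ℝ ι ≃ₗᵢ[ℝ] EuclideanSpace ℝ ι :=
  LinearIsometryEquiv.piLpCongrRight 2 fun l =>
    if l ∈ S then LinearIsometryEquiv.neg ℝ else LinearIsometryEquiv.refl ℝ ℝ

theorem negCoords_apply (S : Finset ι) (v : EuclideanSpace ℝ ι) (l : ι) :
    negCoords S v l = if l ∈ S then -v l else v l := by
  simp only [negCoords, LinearIsometryEquiv.piLpCongrRight_apply, PiLp.toLp_apply]
  split_ifs <;> rfl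

theorem negCoords_negCoords (S : Finset ι) (v : EuclideanSpace ℝ ι) :
    negCoords S (negCoords S v) = v := by
  ext l
  simp only [negCoords_apply]
  split_ifs <;> simp

theorem negCoords_symm (S : Finset ι) : (negCoords S).symm = negCoords S :=
  LinearIsometryEquiv.ext fun v => (negCoords S).symm_apply_eq.mpr (negCoords_negCoords S v).symm

theorem det_negCoords (S : Finset ι) :
    LinearMap.det ((negCoords S).toLinearEquiv : EuclideanSpace ℝ ι →ₗ[ℝ] EuclideanSpace ℝ ι) =
      (-1) ^ S.card := by
  set b := (EuclideanSpace.basisFun ι ℝ).toBasis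
  have hM : LinearMap.toMatrix b b (negCoords S).toLinearEquiv =
      Matrix.diagonal fun l => if l ∈ S then -1 else 1 := by
    ext p q
    rw [LinearMap.toMatrix_apply]
    simp only [b, OrthonormalBasis.coe_toBasis_repr_apply, EuclideanSpace.basisFun_repr,
      OrthonormalBasis.coe_toBasis, EuclideanSpace.basisFun_apply, LinearEquiv.coe_coe,
      LinearIsometryEquiv.coe_toLinearEquiv, negCoords_apply, PiLp.single_apply,
      Matrix.diagonal_apply]
    by_cases hpq : p = q <;> split_ifs <;> simp_all
  rw [← LinearMap.det_toMatrix b, hM, Matrix.det_diagonal, Finset.prod_ite, Finset.prod_const_one,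
    mul_one, Finset.prod_const, Finset.filter_mem_eq_inter, Finset.univ_inter]

theorem negCoords_eq_self_iff (S : Finset ι) (v : EuclideanSpace ℝ ι) :
    negCoords S v = v ↔ ∀ l ∈ S, v l = 0 := by
  constructor
  · intro h l hl
    have := congrArg (· l) h
    simp only [negCoords_apply, if_pos hl] at this
    linarith
  · intro h
    ext l
    rw [negCoords_apply]
    split_ifs with hl
    · simp [h l hl]
    · rfl

end negCoords

theorem negCoords_image_crossPolytope {n : ℕ} (S : Finset (Fin n)) :
    negCoords S '' crossPolytope n = crossPolytope n := by
  rw [LinearIsometryEquiv.image_eq_preimage_symm, negCoords_symm]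
  ext v
  simp only [crossPolytope, Set.mem_preimage, Set.mem_ofPred_eq, negCoords_apply, apply_ite abs,
    abs_neg, ite_self]

theorem mem_spanE_iff {n k : ℕ} (v : EuclideanSpace ℝ (Fin n)) :
    v ∈ spanE n k ↔ ∀ l : Fin n, ¬(1 ≤ (l : ℕ) ∧ (l : ℕ) ≤ k - 1) → v l = 0 := by
  have hb : stdBasis n = (EuclideanSpace.basisFun (Fin n) ℝ).toBasis := by
    ext i
    simp [stdBasis]
  rw [spanE, hb, Module.Basis.mem_span_image]
  simp [Set.subset_def, not_imp_comm]

theorem exists_index_ne_outside_spanE {n k : ℕ} (hk : 1 ≤ k) (hkn : k < n) (i : Fin n) :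
    ∃ j : Fin n, j ≠ i ∧ ¬(1 ≤ (j : ℕ) ∧ (j : ℕ) ≤ k - 1) := by
  by_cases hi : (i : ℕ) = 0
  · exact ⟨⟨k, hkn⟩, Fin.ne_of_val_ne (by change k ≠ (i : ℕ); omega), fun h => by simp at h; omega⟩
  · exact ⟨⟨0, by omega⟩, Fin.ne_of_val_ne (by change 0 ≠ (i : ℕ); omega), by simp⟩

theorem stmt15_general (n : ℕ)
    (K : Set (EuclideanSpace ℝ (Fin n)))
    (hsym : ∀ g : EuclideanSpace ℝ (Fin n) ≃ₗᵢ[ℝ] EuclideanSpace ℝ (Fin n),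
      LinearMap.det (g.toLinearEquiv : EuclideanSpace ℝ (Fin n) →ₗ[ℝ] EuclideanSpace ℝ (Fin n)) = 1 →
      g '' crossPolytope n = crossPolytope n → g '' K = K)
    (k : ℕ) (hk2 : 2 ≤ k) (hkn : k ≤ n - 1)
    (x : EuclideanSpace ℝ (Fin n))
    (hxH : x ∈ spanE n k)
    (y : EuclideanSpace ℝ (Fin n)) (hy : HasGradientAt (gauge K) y x) :
    y ∈ spanE n k := by
  rw [mem_spanE_iff] at hxH ⊢
  intro i hi
  obtain ⟨j, hji, hj⟩ := exists_index_ne_outside_spanE (k := k) (by omega) (by omega) i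
  let g := negCoords {i, j}
  have hgK : g '' K = K := hsym g (by rw [det_negCoords, Finset.card_pair hji.symm]; norm_num)
    (negCoords_image_crossPolytope _)
  have hgx : g x = x := by
    rw [negCoords_eq_self_iff]
    simpa using ⟨hxH i hi, hxH j hj⟩
  have hgy : g y = y :=
    hy.map_eq_of_comp_eq g (gauge_comp_eq_of_image_eq g.toLinearEquiv hgK) hgx
  exact (negCoords_eq_self_iff _ _).1 hgy i (Finset.mem_insert_self _ _)

theorem stmt15 (n : ℕ) (hn : 3 ≤ n)
    (K : Set (EuclideanSpace ℝ (Fin n)))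
    (hK : IsConvexBody K)
    (hsym : ∀ g : EuclideanSpace ℝ (Fin n) ≃ₗᵢ[ℝ] EuclideanSpace ℝ (Fin n),
      LinearMap.det (g.toLinearEquiv : EuclideanSpace ℝ (Fin n) →ₗ[ℝ] EuclideanSpace ℝ (Fin n)) = 1 →
      g '' crossPolytope n = crossPolytope n → g '' K = K)
    (k : ℕ) (hk2 : 2 ≤ k) (hkn : k ≤ n - 1)
    (x : EuclideanSpace ℝ (Fin n)) (hxK : x ∈ frontier K)
    (hxH : x ∈ spanE n k)
    (y : EuclideanSpace ℝ (Fin n)) (hy : HasGradientAt (gauge K) y x) :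
    y ∈ spanE n k :=
  stmt15_general n K hsym k hk2 hkn x hxH y hy
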